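/- Deciding whether Sol_ABD(I, Σ↔) ≠ ∅ for the fixed mapping Σ↔ = { V(x) ↔ B¹(x,v) ∧ C¹(x,v), E₀(x,y) ↔ E¹(x,y), D(z,v) ↔ B¹(x,z) ∧ C¹(y,v) ∧ E¹(x,y) } is NP-hard: for every finite loopless undirected graph G that is not 2-colorable, building the source instance I_G with V^{I_G} the vertex set of G, E₀^{I_G} the edge relation of G, and D^{I_G} all ordered pairs of distinct colors from {r,g,b}, we have Sol_ABD(I_G, Σ↔) ≠ ∅ if and only if G is 3-colorable. -/
import Mathlib


/-- The domain of the reduction: vertices of the graph together with the three colors. -/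
abbrev Dm (γ : Type) := γ ⊕ Fin 3

/-- Pointwise inclusion of indexed families of relations. -/
def famLe {β : Type} (F G : ℤ → Set β) : Prop := ∀ i, F i ⊆ G i

/-- The annotated instance determined by a target relation and its tuple-labeling. -/
def labFam {β : Type} (X : Set β) (ℓ : β → Set ℤ) : ℤ → Set β :=
  fun i => { t | t ∈ X ∧ i ∈ ℓ t }

/-- Model-theoretic satisfaction (over the annotated schema) of
Σ↔_⋄ = { V(x) ↔ ∃v (B₁(x,v) ∧ C₁(x,v)), E₀(x,y) ↔ E₁(x,y),
D(z,v) ↔ ∃x∃y (B₁(x,z) ∧ C₁(y,v) ∧ E₁(x,y)) }. -/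
def diaSat {γ : Type} (Vs : Set (Dm γ)) (E0 Dd : Set (Dm γ × Dm γ))
    (B C E : ℤ → Set (Dm γ × Dm γ)) : Prop :=
  (∀ x : Dm γ, x ∈ Vs ↔ ∃ v, (x, v) ∈ B 1 ∧ (x, v) ∈ C 1) ∧
  (∀ x y : Dm γ, (x, y) ∈ E0 ↔ (x, y) ∈ E 1) ∧
  (∀ z v : Dm γ, (z, v) ∈ Dd ↔ ∃ x y, (x, z) ∈ B 1 ∧ (y, v) ∈ C 1 ∧ (x, y) ∈ E 1)

/-- Existence of a subset-minimal witness `(I', J'_ℓ)` (containing the labeled tuple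
specified by `inWit`) for the above dependencies. -/
def minWit {γ : Type} (Vs : Set (Dm γ)) (E0 Dd : Set (Dm γ × Dm γ))
    (Bset Cset Eset : Set (Dm γ × Dm γ)) (ℓB ℓC ℓE : Dm γ × Dm γ → Set ℤ)
    (inWit : (ℤ → Set (Dm γ × Dm γ)) → (ℤ → Set (Dm γ × Dm γ)) →
             (ℤ → Set (Dm γ × Dm γ)) → Prop) : Prop :=
  ∃ Vs' ⊆ Vs, ∃ E0' ⊆ E0, ∃ Dd' ⊆ Dd, ∃ B' C' E' : ℤ → Set (Dm γ × Dm γ),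
    famLe B' (labFam Bset ℓB) ∧ famLe C' (labFam Cset ℓC) ∧ famLe E' (labFam Eset ℓE) ∧
    inWit B' C' E' ∧ diaSat Vs' E0' Dd' B' C' E' ∧
    ∀ B'' C'' E'' : ℤ → Set (Dm γ × Dm γ), famLe B'' B' → famLe C'' C' → famLe E'' E' →
      diaSat Vs' E0' Dd' B'' C'' E'' → B'' = B' ∧ C'' = C' ∧ E'' = E'

/-- `(I,J) ⊨_ℓ Σ↔` for the mapping of the reduction: labels are nonempty sets, the
annotated instance models Σ↔_⋄, and every labeled target tuple has a subset-minimal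
witness. -/
def abdSat {γ : Type} (Vs : Set (Dm γ)) (E0 Dd : Set (Dm γ × Dm γ))
    (Bset Cset Eset : Set (Dm γ × Dm γ)) (ℓB ℓC ℓE : Dm γ × Dm γ → Set ℤ) : Prop :=
  (∀ t ∈ Bset, (ℓB t).Nonempty) ∧ (∀ t ∈ Cset, (ℓC t).Nonempty) ∧
  (∀ t ∈ Eset, (ℓE t).Nonempty) ∧
  diaSat Vs E0 Dd (labFam Bset ℓB) (labFam Cset ℓC) (labFam Eset ℓE) ∧
  (∀ t ∈ Bset, ∀ i ∈ ℓB t,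
    minWit Vs E0 Dd Bset Cset Eset ℓB ℓC ℓE (fun B' _ _ => t ∈ B' i)) ∧
  (∀ t ∈ Cset, ∀ i ∈ ℓC t,
    minWit Vs E0 Dd Bset Cset Eset ℓB ℓC ℓE (fun _ C' _ => t ∈ C' i)) ∧
  (∀ t ∈ Eset, ∀ i ∈ ℓE t,
    minWit Vs E0 Dd Bset Cset Eset ℓB ℓC ℓE (fun _ _ E' => t ∈ E' i))


section Aux

private lemma aux_edge {γ : Type} (G : SimpleGraph γ) (c : G.Coloring (Fin 3))
    (h2 : ¬ G.Colorable 2) :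
    ∀ i j : Fin 3, i ≠ j → ∃ u w, G.Adj u w ∧ c u = i ∧ c w = j := by
  intro i j hij
  by_contra hno
  push_neg at hno
  apply h2
  refine ⟨SimpleGraph.Coloring.mk (fun u => if c u = i ∨ c u = j then 0 else 1) ?_⟩
  intro u w huw heq
  have hne := c.valid huw
  by_cases hu : c u = i ∨ c u = j
  · by_cases hw : c w = i ∨ c w = j
    · rcases hu with hu|hu <;> rcases hw with hw|hw
      · exact hne (hu.trans hw.symm)
      · exact hno u w huw hu hw
      · exact hno w u huw.symm hw hu
      · exact hne (hu.trans hw.symm)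
    · simp [if_pos hu, if_neg hw] at heq
  · by_cases hw : c w = i ∨ c w = j
    · simp [if_neg hu, if_pos hw] at heq
    · push_neg at hu hw
      refine hne (Fin.ext ?_)
      have a1 : (c u).val ≠ i.val := fun h => hu.1 (Fin.ext h)
      have a2 : (c u).val ≠ j.val := fun h => hu.2 (Fin.ext h)
      have a3 : (c w).val ≠ i.val := fun h => hw.1 (Fin.ext h)
      have a4 : (c w).val ≠ j.val := fun h => hw.2 (Fin.ext h)
      have a5 : i.val ≠ j.val := fun h => hij (Fin.ext h)
      have b1 := (c u).isLt; have b2 := (c w).isLt; have b3 := i.isLt; have b4 := j.isLt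
      omega

private lemma aux_fwd {γ : Type} (G : SimpleGraph γ)
    (Bset Cset Eset : Set (Dm γ × Dm γ)) (ℓB ℓC ℓE : Dm γ × Dm γ → Set ℤ)
    (hdia : diaSat (Set.range Sum.inl)
          { p | ∃ u w : γ, G.Adj u w ∧ p = (Sum.inl u, Sum.inl w) }
          { p | ∃ i j : Fin 3, i ≠ j ∧ p = (Sum.inr i, Sum.inr j) }
          (labFam Bset ℓB) (labFam Cset ℓC) (labFam Eset ℓE)) :
    G.Colorable 3 := by
  obtain ⟨h1, hE, h3⟩ := hdia
  have hv : ∀ u : γ, ∃ v, (Sum.inl u, v) ∈ labFam Bset ℓB 1 ∧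
      (Sum.inl u, v) ∈ labFam Cset ℓC 1 := fun u => (h1 (Sum.inl u)).mp ⟨u, rfl⟩
  choose v hvB hvC using hv
  have key : ∀ u w : γ, G.Adj u w →
      ∃ i j : Fin 3, i ≠ j ∧ v u = Sum.inr i ∧ v w = Sum.inr j := by
    intro u w huw
    have he : (Sum.inl u, Sum.inl w) ∈ labFam Eset ℓE 1 :=
      (hE (Sum.inl u) (Sum.inl w)).mp ⟨u, w, huw, rfl⟩
    obtain ⟨i, j, hij, hp⟩ := (h3 (v u) (v w)).mpr ⟨Sum.inl u, Sum.inl w, hvB u, hvC w, he⟩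
    exact ⟨i, j, hij, congrArg Prod.fst hp, congrArg Prod.snd hp⟩
  refine ⟨SimpleGraph.Coloring.mk
    (fun u => match v u with | Sum.inr i => i | Sum.inl _ => 0) ?_⟩
  intro u w huw heq
  obtain ⟨i, j, hij, hu, hw⟩ := key u w huw
  rw [hu, hw] at heq
  exact hij heq

private lemma aux_minBC {γ : Type} (G : SimpleGraph γ) (c : G.Coloring (Fin 3)) (u : γ)
    (Bset Cset Eset : Set (Dm γ × Dm γ)) (ℓB ℓC ℓE : Dm γ × Dm γ → Set ℤ)
    (hBmem : ((Sum.inl u : Dm γ), (Sum.inr (c u) : Dm γ)) ∈ Bset)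
    (hCmem : ((Sum.inl u : Dm γ), (Sum.inr (c u) : Dm γ)) ∈ Cset)
    (hℓB : 1 ∈ ℓB ((Sum.inl u : Dm γ), (Sum.inr (c u) : Dm γ)))
    (hℓC : 1 ∈ ℓC ((Sum.inl u : Dm γ), (Sum.inr (c u) : Dm γ)))
    (inWit : (ℤ → Set (Dm γ × Dm γ)) → (ℤ → Set (Dm γ × Dm γ)) →
             (ℤ → Set (Dm γ × Dm γ)) → Prop)
    (hin : ∀ F : ℤ → Set (Dm γ × Dm γ),
      ((Sum.inl u : Dm γ), (Sum.inr (c u) : Dm γ)) ∈ F 1 → inWit F F (fun _ => ∅)) :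
    minWit (Set.range Sum.inl)
          { p | ∃ u w : γ, G.Adj u w ∧ p = (Sum.inl u, Sum.inl w) }
          { p | ∃ i j : Fin 3, i ≠ j ∧ p = (Sum.inr i, Sum.inr j) }
          Bset Cset Eset ℓB ℓC ℓE inWit := by
  set t : Dm γ × Dm γ := (Sum.inl u, Sum.inr (c u)) with ht
  refine ⟨{Sum.inl u}, by rintro x rfl; exact ⟨u, rfl⟩, ∅, by simp, ∅, by simp,
    (fun i => {p | i = 1 ∧ p = t}), (fun i => {p | i = 1 ∧ p = t}), (fun _ => ∅),
    ?_, ?_, ?_, hin _ ⟨rfl, rfl⟩, ⟨?_, ?_, ?_⟩, ?_⟩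
  · rintro i p ⟨rfl, rfl⟩; exact ⟨hBmem, hℓB⟩
  · rintro i p ⟨rfl, rfl⟩; exact ⟨hCmem, hℓC⟩
  · rintro i p hp; exact absurd hp (Set.notMem_empty p)
  · intro x
    constructor
    · rintro rfl; exact ⟨Sum.inr (c u), ⟨rfl, rfl⟩, ⟨rfl, rfl⟩⟩
    · rintro ⟨v, ⟨-, hv⟩, -⟩
      have : x = Sum.inl u := congrArg Prod.fst hv
      simp [this]
  · intro x y; simp
  · intro z v
    constructor
    · rintro ⟨⟩
    · rintro ⟨x, y, -, -, h⟩; exact absurd h (Set.notMem_empty _)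
  · intro B'' C'' E'' hB'' hC'' hE'' ⟨d1, _, _⟩
    have hm : t ∈ B'' 1 ∧ t ∈ C'' 1 := by
      obtain ⟨v, hb, hc⟩ := (d1 (Sum.inl u)).mp rfl
      obtain ⟨-, hv⟩ := hB'' 1 hb
      exact hv ▸ ⟨hb, hc⟩
    refine ⟨?_, ?_, ?_⟩
    · funext i; ext p
      exact ⟨fun h => hB'' i h, by rintro ⟨rfl, rfl⟩; exact hm.1⟩
    · funext i; ext p
      exact ⟨fun h => hC'' i h, by rintro ⟨rfl, rfl⟩; exact hm.2⟩
    · funext i; ext p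
      exact ⟨fun h => hE'' i h, fun h => absurd h (Set.notMem_empty p)⟩

private lemma aux_minE {γ : Type} (G : SimpleGraph γ) (c : G.Coloring (Fin 3)) (u w : γ)
    (huw : G.Adj u w)
    (Bset Cset Eset : Set (Dm γ × Dm γ)) (ℓB ℓC ℓE : Dm γ × Dm γ → Set ℤ)
    (hBmem : ((Sum.inl u : Dm γ), (Sum.inr (c u) : Dm γ)) ∈ Bset)
    (hCmem : ((Sum.inl w : Dm γ), (Sum.inr (c w) : Dm γ)) ∈ Cset)
    (hEmem : ((Sum.inl u : Dm γ), (Sum.inl w : Dm γ)) ∈ Eset)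
    (hℓB : 1 ∈ ℓB ((Sum.inl u : Dm γ), (Sum.inr (c u) : Dm γ)))
    (hℓC : 1 ∈ ℓC ((Sum.inl w : Dm γ), (Sum.inr (c w) : Dm γ)))
    (hℓE : 1 ∈ ℓE ((Sum.inl u : Dm γ), (Sum.inl w : Dm γ))) :
    minWit (Set.range Sum.inl)
          { p | ∃ u w : γ, G.Adj u w ∧ p = (Sum.inl u, Sum.inl w) }
          { p | ∃ i j : Fin 3, i ≠ j ∧ p = (Sum.inr i, Sum.inr j) }
          Bset Cset Eset ℓB ℓC ℓE
          (fun _ _ E' => ((Sum.inl u : Dm γ), (Sum.inl w : Dm γ)) ∈ E' (1:ℤ)) := by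
  set tB : Dm γ × Dm γ := (Sum.inl u, Sum.inr (c u)) with htB
  set tC : Dm γ × Dm γ := (Sum.inl w, Sum.inr (c w)) with htC
  set tE : Dm γ × Dm γ := (Sum.inl u, Sum.inl w) with htE
  refine ⟨∅, by simp, {tE}, by rintro p rfl; exact ⟨u, w, huw, rfl⟩,
    {((Sum.inr (c u) : Dm γ), (Sum.inr (c w) : Dm γ))},
    by rintro p rfl; exact ⟨c u, c w, c.valid huw, rfl⟩,
    (fun i => {p | i = 1 ∧ p = tB}), (fun i => {p | i = 1 ∧ p = tC}),
    (fun i => {p | i = 1 ∧ p = tE}),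
    ?_, ?_, ?_, ⟨rfl, rfl⟩, ⟨?_, ?_, ?_⟩, ?_⟩
  · rintro i p ⟨rfl, rfl⟩; exact ⟨hBmem, hℓB⟩
  · rintro i p ⟨rfl, rfl⟩; exact ⟨hCmem, hℓC⟩
  · rintro i p ⟨rfl, rfl⟩; exact ⟨hEmem, hℓE⟩
  · intro x
    constructor
    · rintro ⟨⟩
    · rintro ⟨v, ⟨-, hb⟩, ⟨-, hc⟩⟩
      have h1 : x = Sum.inl u := congrArg Prod.fst hb
      have h2 : x = Sum.inl w := congrArg Prod.fst hc
      exact absurd (Sum.inl.inj (h1 ▸ h2)) huw.ne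
  · intro x y
    constructor
    · intro h; exact ⟨rfl, h⟩
    · rintro ⟨-, h⟩; exact h
  · intro z v
    constructor
    · intro h
      have hz : z = Sum.inr (c u) := congrArg Prod.fst h
      have hv : v = Sum.inr (c w) := congrArg Prod.snd h
      subst hz; subst hv
      exact ⟨Sum.inl u, Sum.inl w, ⟨rfl, rfl⟩, ⟨rfl, rfl⟩, ⟨rfl, rfl⟩⟩
    · rintro ⟨x, y, ⟨-, hb⟩, ⟨-, hc⟩, -⟩
      have h1 : z = Sum.inr (c u) := congrArg Prod.snd hb
      have h2 : v = Sum.inr (c w) := congrArg Prod.snd hc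
      simp [h1, h2]
  · intro B'' C'' E'' hB'' hC'' hE'' ⟨_, d2, d3⟩
    have hE1 : tE ∈ E'' 1 := (d2 (Sum.inl u) (Sum.inl w)).mp rfl
    have hd : ((Sum.inr (c u) : Dm γ), (Sum.inr (c w) : Dm γ)) ∈
        ({((Sum.inr (c u) : Dm γ), (Sum.inr (c w) : Dm γ))} : Set _) := rfl
    obtain ⟨x, y, hb, hc, -⟩ := (d3 _ _).mp hd
    have hbB : tB ∈ B'' 1 := by
      obtain ⟨-, hv⟩ := hB'' 1 hb
      exact hv ▸ hb
    have hcC : tC ∈ C'' 1 := by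
      obtain ⟨-, hv⟩ := hC'' 1 hc
      exact hv ▸ hc
    refine ⟨?_, ?_, ?_⟩
    · funext i; ext p
      exact ⟨fun h => hB'' i h, by rintro ⟨rfl, rfl⟩; exact hbB⟩
    · funext i; ext p
      exact ⟨fun h => hC'' i h, by rintro ⟨rfl, rfl⟩; exact hcC⟩
    · funext i; ext p
      exact ⟨fun h => hE'' i h, by rintro ⟨rfl, rfl⟩; exact hE1⟩

end Aux

/-- For every finite loopless graph `G` that is not 2-colorable, the source instance
`I_G` (vertices, edges, and all ordered pairs of distinct colors) has a nonempty
ABD-semantics under the fixed mapping Σ↔ iff `G` is 3-colorable. -/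
theorem stmt17 {γ : Type} [Fintype γ] (G : SimpleGraph γ) (h2 : ¬ G.Colorable 2) :
    (∃ (Bset Cset Eset : Set (Dm γ × Dm γ)) (ℓB ℓC ℓE : Dm γ × Dm γ → Set ℤ),
        abdSat (Set.range Sum.inl)
          { p | ∃ u w : γ, G.Adj u w ∧ p = (Sum.inl u, Sum.inl w) }
          { p | ∃ i j : Fin 3, i ≠ j ∧ p = (Sum.inr i, Sum.inr j) }
          Bset Cset Eset ℓB ℓC ℓE) ↔
      G.Colorable 3 := by
  constructor
  · rintro ⟨Bset, Cset, Eset, ℓB, ℓC, ℓE, -, -, -, hdia, -, -, -⟩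
    exact aux_fwd G Bset Cset Eset ℓB ℓC ℓE hdia
  · rintro ⟨c⟩
    have hedge := aux_edge G c h2
    refine ⟨{p | ∃ u : γ, p = (Sum.inl u, Sum.inr (c u))},
            {p | ∃ u : γ, p = (Sum.inl u, Sum.inr (c u))},
            {p | ∃ u w : γ, G.Adj u w ∧ p = (Sum.inl u, Sum.inl w)},
            fun _ => {1}, fun _ => {1}, fun _ => {1},
            fun t _ => ⟨1, rfl⟩, fun t _ => ⟨1, rfl⟩, fun t _ => ⟨1, rfl⟩,
            ⟨?_, ?_, ?_⟩, ?_, ?_, ?_⟩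
    · intro x
      constructor
      · rintro ⟨u, rfl⟩
        exact ⟨Sum.inr (c u), ⟨⟨u, rfl⟩, rfl⟩, ⟨⟨u, rfl⟩, rfl⟩⟩
      · rintro ⟨v, ⟨⟨u, hu⟩, -⟩, -⟩
        exact ⟨u, (congrArg Prod.fst hu).symm⟩
    · intro x y
      exact ⟨fun h => ⟨h, rfl⟩, fun h => h.1⟩
    · intro z v
      constructor
      · rintro ⟨i, j, hij, hp⟩
        have hz : z = Sum.inr i := congrArg Prod.fst hp
        have hv : v = Sum.inr j := congrArg Prod.snd hp
        subst hz; subst hv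
        obtain ⟨u, w, huw, hcu, hcw⟩ := hedge i j hij
        exact ⟨Sum.inl u, Sum.inl w, ⟨⟨u, by rw [hcu]⟩, rfl⟩, ⟨⟨w, by rw [hcw]⟩, rfl⟩,
          ⟨⟨u, w, huw, rfl⟩, rfl⟩⟩
      · rintro ⟨x, y, ⟨⟨u', hu'⟩, -⟩, ⟨⟨w', hw'⟩, -⟩, ⟨⟨u0, w0, hadj, he⟩, -⟩⟩
        have hx : x = Sum.inl u' := congrArg Prod.fst hu'
        have hz : z = Sum.inr (c u') := congrArg Prod.snd hu'
        have hy : y = Sum.inl w' := congrArg Prod.fst hw'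
        have hv : v = Sum.inr (c w') := congrArg Prod.snd hw'
        have hx0 : x = Sum.inl u0 := congrArg Prod.fst he
        have hy0 : y = Sum.inl w0 := congrArg Prod.snd he
        have e1 : u' = u0 := Sum.inl.inj (hx.symm.trans hx0)
        have e2 : w' = w0 := Sum.inl.inj (hy.symm.trans hy0)
        have hadj' : G.Adj u' w' := by rw [e1, e2]; exact hadj
        exact ⟨c u', c w', c.valid hadj', by rw [hz, hv]⟩
    · rintro t ⟨u, rfl⟩ i rfl
      refine aux_minBC G c u _ _ _ _ _ _ ?_ ?_ rfl rfl _ (fun F hF => hF)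
      · exact ⟨u, rfl⟩
      · exact ⟨u, rfl⟩
    · rintro t ⟨u, rfl⟩ i rfl
      refine aux_minBC G c u _ _ _ _ _ _ ?_ ?_ rfl rfl _ (fun F hF => hF)
      · exact ⟨u, rfl⟩
      · exact ⟨u, rfl⟩
    · rintro t ⟨u, w, huw, rfl⟩ i rfl
      refine aux_minE G c u w huw _ _ _ _ _ _ ?_ ?_ ?_ rfl rfl rfl
      · exact ⟨u, rfl⟩
      · exact ⟨w, rfl⟩
      · exact ⟨u, w, huw, rfl⟩
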